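/- Let P be a neutral to the right random probability measure, X̲=(X₁,…,X_n) a sample from P, and B₁∈𝒜(u). Then for α_n-almost all x̲ with x_i∈B₁ᶜ for every i, and for every Borel Γ⊆[0,1]: 𝒫[P_{B₁}∈Γ | X̲=x̲] = E[1_Γ(P_{B₁})·(1−P_{B₁})ⁿ] / E[(1−P_{B₁})ⁿ]. -/

import Mathlib

open MeasureTheory ProbabilityTheory Set
open scoped ENNReal Classical BigOperators

/-- The collection of finite unions of members of `S`. -/
def finUnions {𝒳 : Type*} (S : Set (Set 𝒳)) : Set (Set 𝒳) :=
  {B | ∃ T : Finset (Set 𝒳), ↑T ⊆ S ∧ B = ⋃₀ ↑T}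

/-- An indexing collection on a topological space `𝒳`: a family of closed sets generating the
Borel σ-field, containing `∅` and `univ`, closed under arbitrary intersections, any two nonempty
members intersecting, and admitting a sequence of finite sub-semilattices approximating every
member from outside. -/
structure IndexingCollection (𝒳 : Type*) [TopologicalSpace 𝒳] [MeasurableSpace 𝒳] : Type _ where
  sets : Set (Set 𝒳)
  isClosed' : ∀ A ∈ sets, IsClosed A
  generates : MeasurableSpace.generateFrom sets = ‹MeasurableSpace 𝒳›
  empty_mem : ∅ ∈ sets
  univ_mem : Set.univ ∈ sets
  sInter_mem : ∀ S ⊆ sets, S.Nonempty → ⋂₀ S ∈ sets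
  inter_nonempty : ∀ A ∈ sets, ∀ B ∈ sets, A.Nonempty → B.Nonempty → (A ∩ B).Nonempty
  approx : ∃ An : ℕ → Set (Set 𝒳),
    (∀ n, An n ⊆ sets ∧ (An n).Finite ∧ ∀ A ∈ An n, ∀ B ∈ An n, A ∩ B ∈ An n) ∧
    ∀ A ∈ sets, ∃ Bn : ℕ → Set 𝒳,
      (∀ n, Bn n ∈ finUnions (An n)) ∧ A = ⋂ n, Bn n ∧ ∀ n, A ⊆ interior (Bn n)

variable {𝒳 Ω : Type*} [TopologicalSpace 𝒳] [MeasurableSpace 𝒳] [BorelSpace 𝒳]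
  [MeasurableSpace Ω]

/-- `P = (P_A)_{A ∈ ℬ}` is a random probability measure: the `P_A` are `[0,1]`-valued random
variables, finitely additive in distribution, with `P_𝒳 = 1` a.s. and countably additive in
distribution. -/
structure IsRPM (Pr : Measure Ω) (P : Set 𝒳 → Ω → ℝ) : Prop where
  meas : ∀ A : Set 𝒳, MeasurableSet A → Measurable (P A)
  mem_Icc : ∀ A : Set 𝒳, MeasurableSet A → ∀ ω, P A ω ∈ Set.Icc (0:ℝ) 1
  finAdd : ∀ (k m : ℕ) (A : ℕ → Set 𝒳), (∀ j, MeasurableSet (A j)) →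
    (∀ i j, i < k → j < k → i ≠ j → Disjoint (A i) (A j)) →
    ∀ c : Fin (m+1) → ℕ, Monotone c → c 0 = 0 → c (Fin.last m) = k →
      Measure.map (fun ω (l : Fin m) =>
          P (⋃ j ∈ Finset.Ico (c l.castSucc) (c l.succ), A j) ω) Pr
        = Measure.map (fun ω (l : Fin m) =>
            ∑ j ∈ Finset.Ico (c l.castSucc) (c l.succ), P (A j) ω) Pr
  univ_one : ∀ᵐ ω ∂Pr, P Set.univ ω = 1
  ctsAdd : ∀ A : ℕ → Set 𝒳, (∀ n, MeasurableSet (A n)) → Antitone A → (⋂ n, A n) = ∅ →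
    ∀ᵐ ω ∂Pr, Filter.Tendsto (fun n => P (A n) ω) Filter.atTop (nhds 0)

/-- The σ-field `ℱ_{B}` generated by `P_A`, `A ∈ 𝒜`, `A ⊆ B`. -/
def sigmaF (I : IndexingCollection 𝒳) (P : Set 𝒳 → Ω → ℝ) (B : Set 𝒳) : MeasurableSpace Ω :=
  ⨆ (A : Set 𝒳) (_ : A ∈ I.sets ∧ A ⊆ B), MeasurableSpace.comap (P A) inferInstance

/-- The σ-field generated by the whole process `P`. -/
def sigmaP (P : Set 𝒳 → Ω → ℝ) : MeasurableSpace Ω :=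
  ⨆ (A : Set 𝒳) (_ : MeasurableSet A), MeasurableSpace.comap (P A) inferInstance

/-- `Q` is a transition system: each `Q_{B₁B₂}` (for `B₁ ⊆ B₂` in `𝒜(u)`) is a transition
probability on `[0,1]` and the Chapman–Kolmogorov equations hold. -/
def IsTransitionSystem (I : IndexingCollection 𝒳)
    (Q : Set 𝒳 → Set 𝒳 → Kernel ℝ ℝ) : Prop :=
  (∀ B₁ B₂, B₁ ∈ finUnions I.sets → B₂ ∈ finUnions I.sets → B₁ ⊆ B₂ →
      ∀ z ∈ Set.Icc (0:ℝ) 1, Q B₁ B₂ z (Set.Icc (0:ℝ) 1) = 1) ∧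
  ∀ B₁ B₂ B₃, B₁ ∈ finUnions I.sets → B₂ ∈ finUnions I.sets → B₃ ∈ finUnions I.sets →
    B₁ ⊆ B₂ → B₂ ⊆ B₃ → ∀ z₁ ∈ Set.Icc (0:ℝ) 1, ∀ Γ : Set ℝ, MeasurableSet Γ →
      Q B₁ B₃ z₁ Γ = ∫⁻ z₂ in Set.Icc (0:ℝ) 1, Q B₂ B₃ z₂ Γ ∂(Q B₁ B₂ z₁)

/-- `P` is `𝒬`-Markov: for all `B₁ ⊆ B₂` in `𝒜(u)`,
`Pr[P_{B₂} ∈ Γ₂ | ℱ_{B₁}] = Q_{B₁B₂}(P_{B₁}; Γ₂)` a.s. -/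
def IsQMarkov (I : IndexingCollection 𝒳) (Pr : Measure Ω) (P : Set 𝒳 → Ω → ℝ)
    (Q : Set 𝒳 → Set 𝒳 → Kernel ℝ ℝ) : Prop :=
  ∀ B₁ B₂, B₁ ∈ finUnions I.sets → B₂ ∈ finUnions I.sets → B₁ ⊆ B₂ →
    ∀ Γ : Set ℝ, MeasurableSet Γ →
      Pr[Set.indicator {ω | P B₂ ω ∈ Γ} (fun _ => (1:ℝ)) | sigmaF I P B₁]
        =ᵐ[Pr] fun ω => (Q B₁ B₂ (P B₁ ω) Γ).toReal

/-- `X₁, …, X_n` is a sample from `P`: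
`Pr[X₁ ∈ A₁, …, X_n ∈ A_n | P] = ∏ᵢ P_{Aᵢ}` a.s. -/
def IsSample (Pr : Measure Ω) (P : Set 𝒳 → Ω → ℝ) {n : ℕ} (X : Fin n → Ω → 𝒳) : Prop :=
  (∀ i, Measurable (X i)) ∧
  ∀ A : Fin n → Set 𝒳, (∀ i, MeasurableSet (A i)) →
    Pr[Set.indicator {ω | ∀ i, X i ω ∈ A i} (fun _ => (1:ℝ)) | sigmaP P]
      =ᵐ[Pr] fun ω => ∏ i, P (A i) ω

/-- `V_{B₁B₂} = (P_{B₂} - P_{B₁})/(1 - P_{B₁})` on `{P_{B₁} < 1}`, and `1` elsewhere. -/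
noncomputable def Vr (P : Set 𝒳 → Ω → ℝ) (B₁ B₂ : Set 𝒳) (ω : Ω) : ℝ :=
  if P B₁ ω < 1 then (P B₂ ω - P B₁ ω) / (1 - P B₁ ω) else 1

/-- `P` is neutral to the right: for every chain `B₀ ⊆ … ⊆ B_k` in `𝒜(u)` the random variables
`P_{B₀}, V_{B₀B₁}, …, V_{B_{k-1}B_k}` are independent. -/
def IsNTR (I : IndexingCollection 𝒳) (Pr : Measure Ω) (P : Set 𝒳 → Ω → ℝ) : Prop :=
  ∀ (k : ℕ) (B : Fin (k+1) → Set 𝒳), (∀ i, B i ∈ finUnions I.sets) →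
    (∀ i j, i ≤ j → B i ⊆ B j) →
    iIndepFun (m := fun _ => inferInstance)
      (fun i : Fin (k+1) => Fin.cases (motive := fun _ => Ω → ℝ) (P (B 0))
        (fun i' : Fin k => Vr P (B i'.castSucc) (B i'.succ)) i) Pr

/-- A family `(F_{B₁B₂})` of laws on `[0,1]` is a neutral to the right system. -/
def IsNTRSystem (I : IndexingCollection 𝒳) (F : Set 𝒳 → Set 𝒳 → Measure ℝ) : Prop :=
  ∀ B₁ B₂ B₃, B₁ ∈ finUnions I.sets → B₂ ∈ finUnions I.sets → B₃ ∈ finUnions I.sets →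
    B₁ ⊆ B₂ → B₂ ⊆ B₃ → ∀ Γ : Set ℝ, MeasurableSet Γ →
      F B₁ B₃ Γ = ∫⁻ y in Set.Icc (0:ℝ) 1, ∫⁻ z in Set.Icc (0:ℝ) 1,
        Γ.indicator (fun _ => (1:ℝ≥0∞)) (y + z - y * z) ∂(F B₂ B₃) ∂(F B₁ B₂)

/-!
Refine `B₁` and finitely many sets `D₁, …, Dₙ ∈ 𝒜(u)` into a single chain
`B₁ = K₀ ⊆ K₁ ⊆ ⋯ ⊆ K_M = 𝒳` in `𝒜(u)`. Along the chain the increments stick-break,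
`P_{K_{j+1}} - P_{K_j} = (1 - P_{B₁}) ∏_{l<j} (1 - V_l) V_j` with `V_l = V_{K_l K_{l+1}}`, so
`∏ᵢ P_{Dᵢ \ B₁} = (1 - P_{B₁})ⁿ W` where `W` is a function of the `V_l`, hence independent of
`P_{B₁}` by neutrality. As `X̲` is a sample,
`𝒫[Xᵢ ∈ Dᵢ \ B₁ ∀ i, P_{B₁} ∈ Γ] = E[1_Γ(P_{B₁}) (1 - P_{B₁})ⁿ] E[W]`. So on the boxes
`∏ᵢ Dᵢ`, which generate the σ-field of `𝒳ⁿ`, the measures `μ^{(x̲)}(Γ) αₙ(dx̲)` and `αₙ`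
restricted to `(B₁ᶜ)ⁿ` are in the constant ratio `E[1_Γ(P_{B₁}) (1 - P_{B₁})ⁿ] / E[(1 - P_{B₁})ⁿ]`,
which is therefore the density `μ^{(x̲)}(Γ)` there.
-/

section FinUnions

variable {α : Type*} {S : Set (Set α)}

lemma mem_finUnions_of_mem {A : Set α} (hA : A ∈ S) : A ∈ finUnions S :=
  ⟨{A}, by simpa using hA, by simp⟩

lemma union_mem_finUnions {A B : Set α} (hA : A ∈ finUnions S) (hB : B ∈ finUnions S) :
    A ∪ B ∈ finUnions S := by
  obtain ⟨T₁, hT₁, rfl⟩ := hA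
  obtain ⟨T₂, hT₂, rfl⟩ := hB
  exact ⟨T₁ ∪ T₂, by simpa using union_subset hT₁ hT₂, by simp [sUnion_union]⟩

lemma inter_mem_finUnions (hS : ∀ A ∈ S, ∀ B ∈ S, A ∩ B ∈ S) {A B : Set α}
    (hA : A ∈ finUnions S) (hB : B ∈ finUnions S) : A ∩ B ∈ finUnions S := by
  obtain ⟨T₁, hT₁, rfl⟩ := hA
  obtain ⟨T₂, hT₂, rfl⟩ := hB
  refine ⟨(T₁ ×ˢ T₂).image fun p => p.1 ∩ p.2, ?_, ?_⟩
  · rintro _ hs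
    simp only [Finset.coe_image, Finset.coe_product, mem_image, mem_prod] at hs
    obtain ⟨⟨a, b⟩, ⟨ha, hb⟩, rfl⟩ := hs
    exact hS a (hT₁ ha) b (hT₂ hb)
  · rw [sUnion_inter_sUnion, Finset.coe_image, sUnion_image, Finset.coe_product]

end FinUnions

namespace IndexingCollection

variable {E : Type*} [TopologicalSpace E] [MeasurableSpace E] (I : IndexingCollection E)

lemma inter_mem {A B : Set E} (hA : A ∈ I.sets) (hB : B ∈ I.sets) : A ∩ B ∈ I.sets := by
  simpa using I.sInter_mem {A, B} (pair_subset hA hB) (insert_nonempty A {B})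

lemma univ_mem_finUnions : (univ : Set E) ∈ finUnions I.sets :=
  mem_finUnions_of_mem I.univ_mem

lemma inter_mem_finUnions {A B : Set E} (hA : A ∈ finUnions I.sets)
    (hB : B ∈ finUnions I.sets) : A ∩ B ∈ finUnions I.sets :=
  _root_.inter_mem_finUnions (fun _ hA _ hB => I.inter_mem hA hB) hA hB

lemma measurableSet_of_mem_finUnions {B : Set E} (hB : B ∈ finUnions I.sets) :
    MeasurableSet B := by
  obtain ⟨T, hT, rfl⟩ := hB
  refine T.finite_toSet.measurableSet_sUnion fun A hA => ?_
  rw [← I.generates]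
  exact MeasurableSpace.measurableSet_generateFrom (hT hA)

lemma isPiSystem_finUnions : IsPiSystem (finUnions I.sets) :=
  fun _ hA _ hB _ => I.inter_mem_finUnions hA hB

lemma generateFrom_finUnions : MeasurableSpace.generateFrom (finUnions I.sets) = ‹_› :=
  le_antisymm (MeasurableSpace.generateFrom_le fun _ => I.measurableSet_of_mem_finUnions)
    (I.generates.symm.le.trans (MeasurableSpace.generateFrom_mono fun _ => mem_finUnions_of_mem))

lemma pi_eq_generateFrom_pi_finUnions (ι : Type*) [Finite ι] :
    (MeasurableSpace.pi : MeasurableSpace (ι → E))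
      = MeasurableSpace.generateFrom (pi univ '' pi univ fun _ : ι => finUnions I.sets) := by
  rw [← generateFrom_pi_eq fun _ => ⟨fun _ => univ, fun _ => I.univ_mem_finUnions, iUnion_const _⟩,
    I.generateFrom_finUnions]

end IndexingCollection

section Chain

variable {α : Type*}

lemma exists_lt_mem_sdiff_of_notMem_of_mem {K : ℕ → Set α} {x : α} (h₀ : x ∉ K 0) {M : ℕ}
    (hM : x ∈ K M) : ∃ a < M, x ∈ K (a + 1) \ K a := by
  induction M with
  | zero => exact absurd hM h₀
  | succ M ih =>
    by_cases hx : x ∈ K M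
    · obtain ⟨a, ha, hxa⟩ := ih hx
      exact ⟨a, by omega, hxa⟩
    · exact ⟨M, by omega, hM, hx⟩

lemma sdiff_eq_biUnion_inter_sdiff {K : ℕ → Set α} (hK : Monotone K) {M : ℕ} (hM : K M = univ)
    (C : Set α) : C \ K 0 = ⋃ a ∈ Finset.range M, (K (a + 1) ∩ C) \ K a := by
  ext x
  simp only [mem_iUnion, Finset.mem_range]
  constructor
  · rintro ⟨hxC, hx₀⟩
    obtain ⟨a, ha, hxa, hxa'⟩ := exists_lt_mem_sdiff_of_notMem_of_mem hx₀ (hM ▸ mem_univ x)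
    exact ⟨a, ha, ⟨hxa, hxC⟩, hxa'⟩
  · rintro ⟨a, -, ⟨-, hxC⟩, hxa⟩
    exact ⟨hxC, fun hx₀ => hxa (hK (Nat.zero_le a) hx₀)⟩

/-- Inserts `K a ∪ (K (a + 1) ∩ C)` between `K a` and `K (a + 1)`: step `a` of `K` becomes the
steps `2a` and `2a + 1`. -/
def refineChain (K : ℕ → Set α) (C : Set α) (j : ℕ) : Set α :=
  K (j / 2) ∪ (K ((j + 1) / 2) ∩ C)

variable {K : ℕ → Set α} {C : Set α}

lemma refineChain_two_mul (a : ℕ) : refineChain K C (2 * a) = K a := by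
  simp [refineChain, show (2 * a + 1) / 2 = a by omega]

lemma refineChain_two_mul_add_one (a : ℕ) :
    refineChain K C (2 * a + 1) = K a ∪ (K (a + 1) ∩ C) := by
  simp [refineChain, show (2 * a + 1) / 2 = a by omega, show (2 * a + 1 + 1) / 2 = a + 1 by omega]

lemma Monotone.refineChain (hK : Monotone K) : Monotone (refineChain K C) := fun _ _ h =>
  union_subset_union (hK (Nat.div_le_div_right h))
    (inter_subset_inter_left _ (hK (Nat.div_le_div_right (Nat.add_le_add_right h 1))))

lemma refineChain_sdiff_two_mul (a : ℕ) :
    refineChain K C (2 * a + 1) \ refineChain K C (2 * a) = (K (a + 1) ∩ C) \ K a := by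
  rw [refineChain_two_mul_add_one, refineChain_two_mul, union_sdiff_left]

lemma sdiff_eq_union_refineChain_sdiff (hK : Monotone K) (a : ℕ) :
    K (a + 1) \ K a = (refineChain K C (2 * a + 1) \ refineChain K C (2 * a))
      ∪ (refineChain K C (2 * a + 1 + 1) \ refineChain K C (2 * a + 1)) := by
  rw [union_comm, sdiff_union_sdiff_cancel, show 2 * a + 1 + 1 = 2 * (a + 1) by ring,
    refineChain_two_mul, refineChain_two_mul]
  all_goals exact hK.refineChain (Nat.le_succ _)

theorem exists_chain_sdiff_eq_biUnion {F : Set (Set α)} (hunion : ∀ s ∈ F, ∀ t ∈ F, s ∪ t ∈ F)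
    (hinter : ∀ s ∈ F, ∀ t ∈ F, s ∩ t ∈ F) (huniv : univ ∈ F) {B : Set α} (hB : B ∈ F) :
    ∀ {n : ℕ} (C : Fin n → Set α), (∀ i, C i ∈ F) →
      ∃ (M : ℕ) (K : ℕ → Set α) (J : Fin n → Finset ℕ),
        (∀ j, K j ∈ F) ∧ Monotone K ∧ K 0 = B ∧ K M = univ ∧
          ∀ i, J i ⊆ Finset.range M ∧ C i \ B = ⋃ j ∈ J i, K (j + 1) \ K j := by
  intro n
  induction n with
  | zero =>
    refine fun _ _ => ⟨1, fun j => if j = 0 then B else univ, finZeroElim, ?_, ?_, rfl, rfl,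
      finZeroElim⟩
    · intro j
      dsimp only
      split_ifs
      exacts [hB, huniv]
    · intro a b _
      dsimp only
      split_ifs <;> first | rfl | exact subset_univ _ | omega
  | succ n ih =>
    intro C hC
    obtain ⟨M, K, J, hKF, hK, rfl, hKM, hJ⟩ := ih (fun i => C i.succ) fun i => hC i.succ
    refine ⟨2 * M, refineChain K (C 0),
      Fin.cons ((Finset.range M).image (2 * ·)) fun i => (J i).biUnion fun j => {2 * j, 2 * j + 1},
      fun j => hunion _ (hKF _) _ (hinter _ (hKF _) _ (hC 0)), hK.refineChain,
      refineChain_two_mul 0, by rw [refineChain_two_mul, hKM], Fin.cases ⟨?_, ?_⟩ fun i => ⟨?_, ?_⟩⟩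
    · intro j
      simp only [Fin.cons_zero, Finset.mem_image, Finset.mem_range]
      omega
    · rw [Fin.cons_zero, Finset.set_biUnion_finset_image, sdiff_eq_biUnion_inter_sdiff hK hKM]
      simp only [refineChain_sdiff_two_mul]
    · intro j
      simp only [Fin.cons_succ, Finset.mem_biUnion, Finset.mem_insert, Finset.mem_singleton,
        Finset.mem_range]
      rintro ⟨a, ha, rfl | rfl⟩ <;> have := Finset.mem_range.mp ((hJ i).1 ha) <;> omega
    · rw [Fin.cons_succ, (hJ i).2, Finset.set_biUnion_biUnion]
      refine iUnion₂_congr fun a _ => ?_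
      rw [Finset.set_biUnion_insert, Finset.set_biUnion_singleton,
        sdiff_eq_union_refineChain_sdiff hK]

end Chain

lemma ae_mem_of_map_eq {α β : Type*} [MeasurableSpace α] [MeasurableSpace β] {μ : Measure α}
    {f g : α → β} (hf : AEMeasurable f μ) (hg : AEMeasurable g μ) (h : μ.map f = μ.map g)
    {s : Set β} (hs : MeasurableSet s) (hfs : ∀ᵐ x ∂μ, f x ∈ s) : ∀ᵐ x ∂μ, g x ∈ s := by
  have hmap : ∀ᵐ y ∂μ.map f, y ∈ s := (ae_map_iff hf (p := (· ∈ s)) hs).mpr hfs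
  exact (ae_map_iff hg (p := (· ∈ s)) hs).mp (h ▸ hmap)

namespace IsRPM

variable {E : Type*} [MeasurableSpace E] {Pr : Measure Ω} {P : Set E → Ω → ℝ}

lemma ae_sum_eq_one (hP : IsRPM Pr P) {k : ℕ} {A : ℕ → Set E} (hA : ∀ j, MeasurableSet (A j))
    (hd : ∀ i j, i < k → j < k → i ≠ j → Disjoint (A i) (A j))
    (hU : ⋃ j ∈ Finset.range k, A j = univ) :
    ∀ᵐ ω ∂Pr, ∑ j ∈ Finset.range k, P (A j) ω = 1 := by
  have hmap := hP.finAdd k 1 A hA hd ![0, k] (fun a b hab => by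
    fin_cases a <;> fin_cases b <;> simp_all) rfl rfl
  have := ae_mem_of_map_eq (s := {v : Fin 1 → ℝ | v 0 = 1})
    (measurable_pi_lambda _ fun _ =>
      hP.meas _ (.biUnion (to_countable _) fun j _ => hA j)).aemeasurable
    (measurable_pi_lambda _ fun _ =>
      Finset.measurable_sum _ fun j _ => hP.meas _ (hA j)).aemeasurable
    hmap (measurable_pi_apply 0 (measurableSet_singleton 1))
  simp only [mem_ofPred_eq, Fin.castSucc_zero, Fin.succ_zero_eq_one, Matrix.cons_val_zero,
    Matrix.cons_val_one, ← Finset.range_eq_Ico] at this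
  rw [Finset.set_biUnion_coe, hU] at this
  exact this hP.univ_one

lemma ae_union_eq_add (hP : IsRPM Pr P) {D₁ D₂ : Set E} (h₁ : MeasurableSet D₁)
    (h₂ : MeasurableSet D₂) (hd : Disjoint D₁ D₂) :
    ∀ᵐ ω ∂Pr, P (D₁ ∪ D₂) ω = P D₁ ω + P D₂ ω := by
  have hR : MeasurableSet (D₁ ∪ D₂)ᶜ := (h₁.union h₂).compl
  have hR₁ : Disjoint D₁ (D₁ ∪ D₂)ᶜ := disjoint_compl_right.mono_left subset_union_left
  have hR₂ : Disjoint D₂ (D₁ ∪ D₂)ᶜ := disjoint_compl_right.mono_left subset_union_right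
  have hcov : D₁ ∪ D₂ ∪ (D₁ ∪ D₂)ᶜ = univ := union_compl_self _
  -- an opaque `R` keeps `simp` from rewriting the complement below
  generalize (D₁ ∪ D₂)ᶜ = R at hR hR₁ hR₂ hcov
  have h₃ := hP.ae_sum_eq_one (k := 3)
    (A := fun j => if j = 0 then D₁ else if j = 1 then D₂ else R)
    (fun j => by split_ifs <;> assumption)
    (fun i j hi hj hij => by
      interval_cases i <;> interval_cases j <;> simp_all [hd.symm, hR₁.symm, hR₂.symm])
    (by simpa [Finset.range_add_one, union_comm, union_left_comm] using hcov)
  have h₂' := hP.ae_sum_eq_one (k := 2) (A := fun j => if j = 0 then D₁ ∪ D₂ else R)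
    (fun j => by split_ifs; exacts [h₁.union h₂, hR])
    (fun i j hi hj hij => by
      interval_cases i <;> interval_cases j <;> simp_all [hR₁.symm, hR₂.symm])
    (by simpa [Finset.range_add_one, union_comm, union_left_comm] using hcov)
  filter_upwards [h₃, h₂'] with ω h₃ω h₂ω
  simp only [Finset.sum_range_succ, Finset.range_one, Finset.sum_singleton, ↓reduceIte,
    one_ne_zero, OfNat.ofNat_ne_zero, OfNat.ofNat_ne_one] at h₃ω h₂ω
  linarith

lemma ae_empty_eq_zero (hP : IsRPM Pr P) : ∀ᵐ ω ∂Pr, P ∅ ω = 0 := by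
  filter_upwards [hP.ae_union_eq_add .empty .empty (disjoint_empty _)] with ω h
  rw [union_empty] at h
  linarith

lemma ae_biUnion_eq_sum (hP : IsRPM Pr P) {ι : Type*} (s : Finset ι) {D : ι → Set E}
    (hD : ∀ i, MeasurableSet (D i)) (hd : (s : Set ι).PairwiseDisjoint D) :
    ∀ᵐ ω ∂Pr, P (⋃ i ∈ s, D i) ω = ∑ i ∈ s, P (D i) ω := by
  induction s using Finset.induction_on with
  | empty => simpa using hP.ae_empty_eq_zero
  | insert a s ha ih =>
    rw [Finset.coe_insert, pairwiseDisjoint_insert_of_notMem (by simpa using ha)] at hd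
    have hdisj : Disjoint (D a) (⋃ i ∈ s, D i) := disjoint_iUnion₂_right.mpr hd.2
    filter_upwards [hP.ae_union_eq_add (hD a) (s.measurableSet_biUnion fun i _ => hD i) hdisj,
      ih hd.1] with ω h₁ h₂
    rw [Finset.set_biUnion_insert, h₁, h₂, Finset.sum_insert ha]

lemma lintegral_ofReal_one_sub_pow_ne_top [IsFiniteMeasure Pr] (hP : IsRPM Pr P) {B : Set E}
    (hB : MeasurableSet B) (n : ℕ) : ∫⁻ ω, ENNReal.ofReal ((1 - P B ω) ^ n) ∂Pr ≠ ∞ := by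
  refine ne_top_of_le_ne_top (measure_ne_top Pr univ)
    ((lintegral_mono fun ω => ?_).trans_eq lintegral_one)
  have h := hP.mem_Icc B hB ω
  exact ENNReal.ofReal_le_one.mpr (pow_le_one₀ (by linarith [h.2]) (by linarith [h.1]))

end IsRPM

lemma measure_inter_eq_setLIntegral_of_condExp_ae_eq {α : Type*} {m m₀ : MeasurableSpace α}
    {μ : Measure α} [IsFiniteMeasure μ] (hm : m ≤ m₀) {S G : Set α} (hS : MeasurableSet[m₀] S)
    (hG : MeasurableSet[m] G) {f : α → ℝ} (hf : μ[S.indicator fun _ => (1 : ℝ) | m] =ᵐ[μ] f) :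
    μ (S ∩ G) = ∫⁻ x in G, ENNReal.ofReal (f x) ∂μ := by
  have hf_nonneg : 0 ≤ᵐ[μ] f := by
    filter_upwards [condExp_nonneg (m := m) (ae_of_all μ fun x => indicator_nonneg
      (fun _ _ => zero_le_one (α := ℝ)) x), hf] with x hx hfx
    exact hfx ▸ hx
  rw [← ofReal_integral_eq_lintegral_ofReal (integrable_condExp.congr hf).integrableOn
      (ae_restrict_of_ae hf_nonneg), ← setIntegral_congr_ae (hm _ hG) (hf.mono fun _ h _ => h),
    setIntegral_condExp hm ((integrable_const 1).indicator hS) hG, ← Pi.one_def,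
    integral_indicator_one hS, measureReal_restrict_apply hS, ofReal_measureReal]

section Sample

variable {E : Type*} [MeasurableSpace E] {Pr : Measure Ω} [IsFiniteMeasure Pr]
  {P : Set E → Ω → ℝ} {n : ℕ} {X : Fin n → Ω → E}

lemma IsSample.measure_inter_eq_lintegral (hP : IsRPM Pr P) (hX : IsSample Pr P X) {B : Set E}
    (hB : MeasurableSet B) {D : Fin n → Set E} (hD : ∀ i, MeasurableSet (D i)) {Γ : Set ℝ}
    (hΓ : MeasurableSet Γ) :
    Pr ({ω | ∀ i, X i ω ∈ D i} ∩ P B ⁻¹' Γ)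
      = ∫⁻ ω, Γ.indicator (fun _ => (1 : ℝ≥0∞)) (P B ω) * ENNReal.ofReal (∏ i, P (D i) ω) ∂Pr := by
  have hm : sigmaP P ≤ ‹MeasurableSpace Ω› :=
    iSup₂_le fun A hA => (hP.meas A hA).comap_le
  have hPB : Measurable[sigmaP P] (P B) := Measurable.of_comap_le (le_iSup₂_of_le B hB le_rfl)
  have hS : MeasurableSet {ω | ∀ i, X i ω ∈ D i} := by
    simpa only [ofPred_forall] using .iInter fun i => hX.1 i (hD i)
  rw [measure_inter_eq_setLIntegral_of_condExp_ae_eq hm hS (hPB hΓ) (hX.2 D hD),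
    ← lintegral_indicator (hm _ (hPB hΓ))]
  congr with ω
  by_cases h : P B ω ∈ Γ <;> simp [h]

end Sample

section Vr

variable {E Ω' : Type*} {P : Set E → Ω' → ℝ}

lemma measurable_Vr [MeasurableSpace Ω'] {A B : Set E} (hA : Measurable (P A))
    (hB : Measurable (P B)) : Measurable (Vr P A B) :=
  Measurable.ite (measurableSet_lt hA measurable_const) ((hB.sub hA).div (measurable_const.sub hA))
    measurable_const

lemma one_sub_mul_one_sub_Vr {A B : Set E} {ω : Ω'} (hAB : P A ω ≤ P B ω) (hB : P B ω ≤ 1) :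
    (1 - P A ω) * (1 - Vr P A B ω) = 1 - P B ω := by
  unfold Vr
  split_ifs with hA
  · rw [mul_one_sub, mul_div_cancel₀ _ (sub_ne_zero.mpr hA.ne')]
    ring
  · have : P B ω = 1 := by linarith
    simp [this]

lemma sub_eq_mul_prod_mul_Vr {K : ℕ → Set E} {ω : Ω'}
    (hK : ∀ l, P (K l) ω ≤ P (K (l + 1)) ω ∧ P (K (l + 1)) ω ≤ 1) (j : ℕ) :
    P (K (j + 1)) ω - P (K j) ω = (1 - P (K 0) ω) *
      ((∏ l ∈ Finset.range j, (1 - Vr P (K l) (K (l + 1)) ω)) * Vr P (K j) (K (j + 1)) ω) := by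
  have hrest : ∀ j, 1 - P (K j) ω
      = (1 - P (K 0) ω) * ∏ l ∈ Finset.range j, (1 - Vr P (K l) (K (l + 1)) ω) := by
    intro j
    induction j with
    | zero => simp
    | succ j ih =>
      rw [Finset.prod_range_succ, ← mul_assoc, ← ih, one_sub_mul_one_sub_Vr (hK j).1 (hK j).2]
  have h := hrest (j + 1)
  rw [Finset.prod_range_succ] at h
  linear_combination hrest j - h

end Vr

noncomputable abbrev sigmaVr {E : Type*} (P : Set E → Ω → ℝ) (K : ℕ → Set E) (M : ℕ) :
    MeasurableSpace Ω :=
  ⨆ l < M, MeasurableSpace.comap (Vr P (K l) (K (l + 1))) inferInstance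

namespace IsNTR

variable {E : Type*} [TopologicalSpace E] [MeasurableSpace E] {I : IndexingCollection E}
  {Pr : Measure Ω} {P : Set E → Ω → ℝ}

lemma indep_comap_Vr (hP : IsRPM Pr P) (hNTR : IsNTR I Pr P) {K : ℕ → Set E}
    (hKI : ∀ j, K j ∈ finUnions I.sets) (hK : Monotone K) (M : ℕ) :
    Indep (MeasurableSpace.comap (P (K 0)) inferInstance) (sigmaVr P K M) Pr := by
  have hPK : ∀ j, Measurable (P (K j)) := fun j =>
    hP.meas _ (I.measurableSet_of_mem_finUnions (hKI j))
  have hind := (hNTR M (fun j => K j) (fun j => hKI j) fun i j hij => hK hij).iIndep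
  refine indep_of_indep_of_le (indep_iSup_of_disjoint (fun i => ?_) hind
    (disjoint_compl_right (a := {0}))) (le_iSup₂_of_le 0 rfl le_rfl)
    (iSup₂_le fun l hl => le_iSup₂_of_le (Fin.succ ⟨l, hl⟩) (Fin.succ_ne_zero _) le_rfl)
  refine measurable_iff_comap_le.mp (Fin.cases ?_ (fun i => ?_) i)
  · exact hPK 0
  · exact measurable_Vr (hPK _) (hPK _)

theorem exists_indepFun_prod_sdiff_eq (hP : IsRPM Pr P) (hNTR : IsNTR I Pr P) {B : Set E}
    (hB : B ∈ finUnions I.sets) {n : ℕ} {D : Fin n → Set E} (hD : ∀ i, D i ∈ finUnions I.sets) :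
    ∃ W : Ω → ℝ, Measurable W ∧ IndepFun (P B) W Pr ∧
      ∀ᵐ ω ∂Pr, ∏ i, P (D i \ B) ω = (1 - P B ω) ^ n * W ω := by
  obtain ⟨M, K, J, hKI, hK, rfl, -, hJ⟩ := exists_chain_sdiff_eq_biUnion
    (fun _ hs _ ht => union_mem_finUnions hs ht) (fun _ hs _ ht => I.inter_mem_finUnions hs ht)
    I.univ_mem_finUnions hB D hD
  have hKm : ∀ j, MeasurableSet (K j) := fun j => I.measurableSet_of_mem_finUnions (hKI j)
  set V : ℕ → Ω → ℝ := fun l => Vr P (K l) (K (l + 1))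
  have hVm : ∀ l < M, Measurable[sigmaVr P K M] (V l) := fun l hl =>
    Measurable.of_comap_le (le_iSup₂_of_le l hl le_rfl)
  set W : Ω → ℝ := fun ω => ∏ i, ∑ j ∈ J i, (∏ l ∈ Finset.range j, (1 - V l ω)) * V j ω
  have hW : Measurable[sigmaVr P K M] W := by
    refine Finset.measurable_prod _ fun i _ => Finset.measurable_sum _ fun j hj => ?_
    have hjM : j < M := Finset.mem_range.mp ((hJ i).1 hj)
    refine Measurable.mul (Finset.measurable_prod _ fun l hl => ?_) (hVm j hjM)
    exact measurable_const.sub (hVm l ((Finset.mem_range.mp hl).trans hjM))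
  refine ⟨W, hW.mono (iSup₂_le fun l _ => (measurable_Vr (hP.meas _ (hKm l))
    (hP.meas _ (hKm (l + 1)))).comap_le) le_rfl, ?_, ?_⟩
  · exact (IndepFun_iff_Indep _ _ _).mpr (indep_of_indep_of_le_right
      (indep_comap_Vr hP hNTR hKI hK M) hW.comap_le)
  have hstep : ∀ᵐ ω ∂Pr, ∀ j, P (K (j + 1)) ω = P (K j) ω + P (K (j + 1) \ K j) ω := by
    refine ae_all_iff.mpr fun j => ?_
    have := hP.ae_union_eq_add (hKm j) ((hKm (j + 1)).diff (hKm j)) disjoint_sdiff_right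
    rwa [union_sdiff_cancel (hK (Nat.le_succ j))] at this
  have hsum : ∀ᵐ ω ∂Pr, ∀ i, P (D i \ K 0) ω = ∑ j ∈ J i, P (K (j + 1) \ K j) ω := by
    refine ae_all_iff.mpr fun i => ?_
    rw [(hJ i).2]
    refine hP.ae_biUnion_eq_sum _ (fun j => (hKm (j + 1)).diff (hKm j)) fun a _ b _ hab => ?_
    simpa only [Function.onFun, hK.disjointed_add_one] using
      disjoint_disjointed K (by simpa using hab : a + 1 ≠ b + 1)
  filter_upwards [hstep, hsum] with ω hstep hsum
  have hchain : ∀ l, P (K l) ω ≤ P (K (l + 1)) ω ∧ P (K (l + 1)) ω ≤ 1 := fun l =>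
    ⟨by linarith [hstep l, (hP.mem_Icc _ ((hKm (l + 1)).diff (hKm l)) ω).1],
      (hP.mem_Icc _ (hKm (l + 1)) ω).2⟩
  calc ∏ i, P (D i \ K 0) ω
      = ∏ i, (1 - P (K 0) ω) * ∑ j ∈ J i, (∏ l ∈ Finset.range j, (1 - V l ω)) * V j ω := by
        refine Finset.prod_congr rfl fun i _ => ?_
        rw [hsum i, Finset.mul_sum]
        refine Finset.sum_congr rfl fun j _ => ?_
        rw [← sub_eq_mul_prod_mul_Vr hchain j, hstep j]
        ring
    _ = (1 - P (K 0) ω) ^ n * W ω := by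
        rw [Finset.prod_mul_distrib, Finset.prod_const, Finset.card_univ, Fintype.card_fin]

theorem exists_measure_sample_inter_eq_mul [IsFiniteMeasure Pr] (hP : IsRPM Pr P)
    (hNTR : IsNTR I Pr P) {n : ℕ} {X : Fin n → Ω → E} (hX : IsSample Pr P X) {B : Set E}
    (hB : B ∈ finUnions I.sets) {D : Fin n → Set E} (hD : ∀ i, D i ∈ finUnions I.sets) :
    ∃ c : ℝ≥0∞, ∀ Γ : Set ℝ, MeasurableSet Γ →
      Pr ({ω | ∀ i, X i ω ∈ D i \ B} ∩ P B ⁻¹' Γ)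
        = (∫⁻ ω, Γ.indicator (fun _ => (1 : ℝ≥0∞)) (P B ω)
            * ENNReal.ofReal ((1 - P B ω) ^ n) ∂Pr) * c := by
  obtain ⟨W, hWm, hind, hW⟩ := exists_indepFun_prod_sdiff_eq hP hNTR hB hD
  have hBm : MeasurableSet B := I.measurableSet_of_mem_finUnions hB
  refine ⟨∫⁻ ω, ENNReal.ofReal (W ω) ∂Pr, fun Γ hΓ => ?_⟩
  have hφ : Measurable fun t : ℝ =>
      Γ.indicator (fun _ => (1 : ℝ≥0∞)) t * ENNReal.ofReal ((1 - t) ^ n) :=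
    (measurable_const.indicator hΓ).mul (by fun_prop)
  rw [hX.measure_inter_eq_lintegral hP hBm
      (fun i => (I.measurableSet_of_mem_finUnions (hD i)).diff hBm) hΓ,
    ← lintegral_mul_eq_lintegral_mul_lintegral_of_indepFun''
      (f := fun ω => Γ.indicator (fun _ => (1 : ℝ≥0∞)) (P B ω)
        * ENNReal.ofReal ((1 - P B ω) ^ n))
      (hφ.comp (hP.meas B hBm)).aemeasurable hWm.ennreal_ofReal.aemeasurable
      (hind.comp hφ ENNReal.measurable_ofReal)]
  refine lintegral_congr_ae ?_
  filter_upwards [hW] with ω hω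
  have hPB := hP.mem_Icc B hBm ω
  rw [hω, ENNReal.ofReal_mul (pow_nonneg (by linarith [hPB.2]) n), mul_assoc]

end IsNTR

lemma ae_eq_div_of_forall_setLIntegral_eq_mul {β : Type*} [mβ : MeasurableSpace β]
    {μ : Measure β} [IsFiniteMeasure μ] {C : Set (Set β)}
    (hgen : mβ = MeasurableSpace.generateFrom C)
    (hC : IsPiSystem C) (huniv : univ ∈ C) {f : β → ℝ≥0∞} (hf : Measurable f)
    (hfi : ∫⁻ x, f x ∂μ ≠ ∞) {a b : ℝ≥0∞} (ha : a ≠ ∞)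
    (h : ∀ s ∈ C, ∃ c, ∫⁻ x in s, f x ∂μ = b * c ∧ μ s = a * c) :
    ∀ᵐ x ∂μ, f x = b / a := by
  rcases eq_or_ne a 0 with rfl | ha₀
  · obtain ⟨c, -, hc⟩ := h univ huniv
    rw [zero_mul, Measure.measure_univ_eq_zero] at hc
    simp [hc]
  have : IsFiniteMeasure (μ.withDensity fun x => a * f x) := isFiniteMeasure_withDensity
    (by rw [lintegral_const_mul a hf]; exact ENNReal.mul_ne_top ha hfi)
  have hCeq : ∀ s ∈ C, μ.withDensity (fun x => a * f x) s = μ.withDensity (fun _ => b) s := by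
    intro s hs
    obtain ⟨c, h₁, h₂⟩ := h s hs
    have hsm : MeasurableSet s := hgen ▸ MeasurableSpace.measurableSet_generateFrom hs
    rw [withDensity_apply _ hsm, withDensity_apply _ hsm, lintegral_const_mul a hf,
      setLIntegral_const, h₁, h₂]
    ring
  have heq := ext_of_generate_finite C hgen hC hCeq (hCeq univ huniv)
  filter_upwards [(withDensity_eq_iff_of_sigmaFinite (hf.const_mul a).aemeasurable
    aemeasurable_const).mp heq] with x hx
  exact (ENNReal.eq_div_iff ha₀ ha).mpr hx

theorem stmt14_general (I : IndexingCollection 𝒳) (Pr : Measure Ω) [IsProbabilityMeasure Pr]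
    (P : Set 𝒳 → Ω → ℝ) (hP : IsRPM Pr P) (hNTR : IsNTR I Pr P)
    (n : ℕ) (X : Fin n → Ω → 𝒳) (hX : IsSample Pr P X)
    (B₁ : Set 𝒳) (hB₁ : B₁ ∈ finUnions I.sets)
    -- `μpost = μ^{(x̲)}_{B₁}` : a regular conditional distribution of `P_{B₁}` given `X̲ = x̲`
    (μpost : Kernel (Fin n → 𝒳) ℝ)
    (hμpost : ∀ T : Set (Fin n → 𝒳), MeasurableSet T → ∀ Γ : Set ℝ, MeasurableSet Γ →
      Pr {ω | (fun i => X i ω) ∈ T ∧ P B₁ ω ∈ Γ}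
        = ∫⁻ x in T, μpost x Γ ∂(Pr.map (fun ω (i : Fin n) => X i ω))) :
    ∀ Γ : Set ℝ, MeasurableSet Γ →
      ∀ᵐ x ∂(Pr.map (fun ω (i : Fin n) => X i ω)),
        (∀ i, x i ∈ B₁ᶜ) →
          μpost x Γ
            = (∫⁻ ω, Γ.indicator (fun _ => (1:ℝ≥0∞)) (P B₁ ω)
                  * ENNReal.ofReal ((1 - P B₁ ω) ^ n) ∂Pr)
              / ∫⁻ ω, ENNReal.ofReal ((1 - P B₁ ω) ^ n) ∂Pr := by
  intro Γ hΓ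
  have hB₁m : MeasurableSet B₁ := I.measurableSet_of_mem_finUnions hB₁
  have hXm : Measurable fun ω (i : Fin n) => X i ω := measurable_pi_lambda _ hX.1
  set T : Set (Fin n → 𝒳) := pi univ fun _ => B₁ᶜ
  have hT : MeasurableSet T := .univ_pi fun _ => hB₁m.compl
  have hpre : ∀ D : Fin n → Set 𝒳,
      (fun ω i => X i ω) ⁻¹' (pi univ D ∩ T) = {ω | ∀ i, X i ω ∈ D i \ B₁} := by
    intro D
    ext ω
    simp [T, forall_and]
  refine ((ae_restrict_iff' hT).mp (ae_eq_div_of_forall_setLIntegral_eq_mul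
    (I.pi_eq_generateFrom_pi_finUnions (Fin n)) (IsPiSystem.pi fun _ => I.isPiSystem_finUnions)
    ⟨fun _ => univ, fun _ _ => I.univ_mem_finUnions, pi_univ _⟩ (μpost.measurable_coe hΓ)
    (by rw [← hμpost T hT Γ hΓ]; exact measure_ne_top _ _)
    (hP.lintegral_ofReal_one_sub_pow_ne_top hB₁m n) ?_)).mono
    fun x hx hxT => hx (mem_univ_pi.mpr hxT)
  rintro _ ⟨D, hD, rfl⟩
  obtain ⟨c, hc⟩ := hNTR.exists_measure_sample_inter_eq_mul hP hX hB₁ fun i => hD i (mem_univ i)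
  have hs : MeasurableSet (pi univ D) :=
    .univ_pi fun i => I.measurableSet_of_mem_finUnions (hD i (mem_univ i))
  refine ⟨c, ?_, ?_⟩
  · rw [Measure.restrict_restrict hs, ← hμpost _ (hs.inter hT) Γ hΓ, ← hc Γ hΓ, ← hpre]
    rfl
  · rw [Measure.restrict_apply hs, Measure.map_apply hXm (hs.inter hT), hpre, ← inter_univ {ω | _},
      ← preimage_univ (f := P B₁), hc univ .univ]
    simp

/-- Proposition 4.7(a). For a neutral to the right `P` and a sample `X̲`,
for `αₙ`-almost all `x̲` with all coordinates outside `B₁`,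
`𝒫[P_{B₁} ∈ Γ | X̲ = x̲] = E[1_Γ(P_{B₁})(1-P_{B₁})ⁿ] / E[(1-P_{B₁})ⁿ]`. -/
theorem stmt14 (I : IndexingCollection 𝒳) (Pr : Measure Ω) [IsProbabilityMeasure Pr]
    (P : Set 𝒳 → Ω → ℝ) (hP : IsRPM Pr P) (hNTR : IsNTR I Pr P)
    (n : ℕ) (X : Fin n → Ω → 𝒳) (hX : IsSample Pr P X)
    (B₁ : Set 𝒳) (hB₁ : B₁ ∈ finUnions I.sets)
    -- `μpost = μ^{(x̲)}_{B₁}` : a regular conditional distribution of `P_{B₁}` given `X̲ = x̲`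
    (μpost : Kernel (Fin n → 𝒳) ℝ) [IsMarkovKernel μpost]
    (hμpost : ∀ T : Set (Fin n → 𝒳), MeasurableSet T → ∀ Γ : Set ℝ, MeasurableSet Γ →
      Pr {ω | (fun i => X i ω) ∈ T ∧ P B₁ ω ∈ Γ}
        = ∫⁻ x in T, μpost x Γ ∂(Pr.map (fun ω (i : Fin n) => X i ω))) :
    ∀ Γ : Set ℝ, MeasurableSet Γ →
      ∀ᵐ x ∂(Pr.map (fun ω (i : Fin n) => X i ω)),
        (∀ i, x i ∈ B₁ᶜ) →
          μpost x Γ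
            = (∫⁻ ω, Γ.indicator (fun _ => (1:ℝ≥0∞)) (P B₁ ω)
                  * ENNReal.ofReal ((1 - P B₁ ω) ^ n) ∂Pr)
              / ∫⁻ ω, ENNReal.ofReal ((1 - P B₁ ω) ^ n) ∂Pr :=
  stmt14_general I Pr P hP hNTR n X hX B₁ hB₁ μpost hμpost
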